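/- arXiv:2508.04693 — 3 statements merged into one kernel-verified Lean document; each statement's English description precedes it below -/
import Mathlib

section
/- Let G be a finite group and A a finite abelian group with a G-action, with α : G³ → A a normalized 3-cocycle. Define the composition of gauge transformations φ, ψ (with φ : τ' → τ'' and ψ : τ → τ') on a simplicial complex M by (φψ)₀(v) = φ₀(v)·ψ₀(v) and (φψ)₁(e) = φ₁(e)·(φ₀(e₁) ▷ ψ₁(e)) · α(τ₁''(e),φ₀(e₀),ψ₀(e₀)) · α(φ₀(e₁),ψ₀(e₁),τ₁(e)) / α(φ₀(e₁),τ₁'(e),ψ₀(e₀)). Then for three composable gauge transformations φ, ψ, χ, the map ξ : M₀ → A given by ξ(v) = α(φ₀(v),ψ₀(v),χ₀(v)) defines an equivalence (φψ)χ ⇒ φ(ψχ), i.e. φ₀(v)ψ₀(v)χ₀(v) agrees on both sides and ((φψ)χ)₁(e) · (τ₁'''(e) ▷ ξ(e₀)) = (φ(ψχ))₁(e) · ξ(e₁) for every edge e, where τ''' is the common target connection. -/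
section

variable {G A : Type*} [Group G] [CommGroup A] [MulDistribMulAction G A]
variable {V E : Type*}

/-- The edge component of the composition of two gauge transformations of flat
`𝒢(G,A,α)`-connections: `φ : τmid → τtgt` composed with `ψ : τsrc → τmid`.
Here `s e` and `t e` are the endpoints `e₀, e₁` of the edge `e`, and
`(φψ)₁(e) = φ₁(e)·(φ₀(e₁) ▷ ψ₁(e)) · α(τtgt(e),φ₀(e₀),ψ₀(e₀)) ·
α(φ₀(e₁),ψ₀(e₁),τsrc(e)) / α(φ₀(e₁),τmid(e),ψ₀(e₀))`. -/
def gaugeComp₁ (α : G → G → G → A) (s t : E → V)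
    (τtgt τmid τsrc : E → G)
    (φ₀ : V → G) (φ₁ : E → A) (ψ₀ : V → G) (ψ₁ : E → A) : E → A :=
  fun e =>
    φ₁ e * (φ₀ (t e) • ψ₁ e)
      * α (τtgt e) (φ₀ (s e)) (ψ₀ (s e))
      * α (φ₀ (t e)) (ψ₀ (t e)) (τsrc e)
      * (α (φ₀ (t e)) (τmid e) (ψ₀ (s e)))⁻¹

/-- **The associator of the composition of gauge transformations.**
For composable gauge transformations `χ : τ → τ'`, `ψ : τ' → τ''`,
`φ : τ'' → τ'''`, the map `ξ(v) = α(φ₀(v),ψ₀(v),χ₀(v))` defines an equivalence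
`(φψ)χ ⇒ φ(ψχ)`: the vertex components agree and
`((φψ)χ)₁(e)·(τ'''₁(e) ▷ ξ(e₀)) = (φ(ψχ))₁(e)·ξ(e₁)` for every edge `e`. -/
theorem gauge_transformation_associator
    (α : G → G → G → A)
    (hα : ∀ g h k l : G,
      (g • α h k l) * α g (h * k) l * α g h k = α g h (k * l) * α (g * h) k l)
    (hnorm : ∀ g h k : G, g = 1 ∨ h = 1 ∨ k = 1 → α g h k = 1)
    (s t : E → V)
    (τ τ' τ'' τ''' : E → G)
    (χ₀ : V → G) (χ₁ : E → A) (ψ₀ : V → G) (ψ₁ : E → A) (φ₀ : V → G) (φ₁ : E → A)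
    (hχ : ∀ e, χ₀ (t e) * τ e = τ' e * χ₀ (s e))
    (hψ : ∀ e, ψ₀ (t e) * τ' e = τ'' e * ψ₀ (s e))
    (hφ : ∀ e, φ₀ (t e) * τ'' e = τ''' e * φ₀ (s e)) :
    (∀ v, (φ₀ v * ψ₀ v) * χ₀ v = φ₀ v * (ψ₀ v * χ₀ v)) ∧
    (∀ e,
      gaugeComp₁ α s t τ''' τ' τ (fun v => φ₀ v * ψ₀ v)
          (gaugeComp₁ α s t τ''' τ'' τ' φ₀ φ₁ ψ₀ ψ₁) χ₀ χ₁ e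
        * (τ''' e • α (φ₀ (s e)) (ψ₀ (s e)) (χ₀ (s e)))
      = gaugeComp₁ α s t τ''' τ'' τ φ₀ φ₁ (fun v => ψ₀ v * χ₀ v)
          (gaugeComp₁ α s t τ'' τ' τ ψ₀ ψ₁ χ₀ χ₁) e
        * α (φ₀ (t e)) (ψ₀ (t e)) (χ₀ (t e))) := by
  refine ⟨fun v => mul_assoc _ _ _, fun e => ?_⟩
  have h1 := hα (τ''' e) (φ₀ (s e)) (ψ₀ (s e)) (χ₀ (s e))
  rw [← hφ e] at h1
  have h2 := hα (φ₀ (t e)) (τ'' e) (ψ₀ (s e)) (χ₀ (s e))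
  rw [← hψ e] at h2
  have h3 := hα (φ₀ (t e)) (ψ₀ (t e)) (τ' e) (χ₀ (s e))
  rw [← hχ e] at h3
  have h4 := hα (φ₀ (t e)) (ψ₀ (t e)) (χ₀ (t e)) (τ e)
  simp only [gaugeComp₁, smul_mul', smul_inv', mul_smul]
  replace h1 := congrArg Additive.ofMul h1
  replace h2 := congrArg Additive.ofMul h2
  replace h3 := congrArg Additive.ofMul h3
  replace h4 := congrArg Additive.ofMul h4
  simp only [ofMul_mul] at h1 h2 h3 h4
  apply Additive.ofMul.injective
  simp only [ofMul_mul, ofMul_inv]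
  linear_combination (norm := abel1) h1 - h2 + h3 - h4

end
end

section
/- Let G be a finite group, A a finite abelian group with G-action, and 𝒢 = 𝒢(G,A,α). The number of flat 𝒢-connections on the boundary of the (n+1)-simplex ∂Δ_{n+1} (for n ≥ 3) equals |G|^{n+1} · |A|^{(n+1)n/2}. Consequently the partition function Z(Sⁿ) = |G|^{-(n+2)} · |A|^{-((n+2)(n+1)/2 − (n+2))} · |G|^{n+1} · |A|^{(n+1)n/2} · |G| equals |A|/|G| when the action S(τ) = 1 for all flat connections. -/
section Aux
variable {G A : Type*} [Group G] [CommGroup A] [MulDistribMulAction G A]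

def bTau1 {n : ℕ} (g : Fin (n+2) → G) (i j : Fin (n+2)) : G :=
  if i < j then g j * (g i)⁻¹ else 1

def gExt {n : ℕ} (g : Fin (n+1) → G) (i : Fin (n+2)) : G :=
  if h : i.val = 0 then 1 else g ⟨i.val - 1, by have := i.isLt; omega⟩

def bA {n : ℕ} (a : ∀ j : Fin (n+1), Fin j.val → A) (i j : Fin (n+2)) : A :=
  if h : 0 < i ∧ i < j then
    a ⟨j.val - 1, by
        have h2 := h.2; rw [Fin.lt_def] at h2; have := j.isLt; omega⟩
      ⟨i.val - 1, by
        have h1 := h.1; have h2 := h.2; rw [Fin.lt_def] at h1 h2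
        simp only [Fin.val_zero] at h1
        show i.val - 1 < j.val - 1; omega⟩
  else 1

def bTau2 {n : ℕ} (α : G → G → G → A) (g : Fin (n+2) → G)
    (a : ∀ j : Fin (n+1), Fin j.val → A) (i j k : Fin (n+2)) : A :=
  if 0 < i then
    if i < j ∧ j < k then
      (bA a i k)⁻¹ * (bTau1 g j k • bA a i j) * bA a j k
        * α (bTau1 g j k) (bTau1 g i j) (bTau1 g 0 i)
    else 1
  else bA a j k

lemma bTau1_mul {n : ℕ} (g : Fin (n+2) → G) {i j k : Fin (n+2)}
    (hij : i < j) (hjk : j < k) : bTau1 g i k = bTau1 g j k * bTau1 g i j := by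
  simp [bTau1, hij, hjk, hij.trans hjk, mul_assoc]

lemma calc_aux {A : Type*} [CommGroup A] (x1 x2 x3 x4 u v w t1 t2 t3 t4 : A)
    (h : x4 * t1 * t2 = t4 * t3) :
    (x1⁻¹ * x2 * x3 * x4) * (u⁻¹ * x1 * v * t1) * t2
      = (u⁻¹ * x2 * w * t3) * (w⁻¹ * x3 * v * t4) := by
  calc (x1⁻¹ * x2 * x3 * x4) * (u⁻¹ * x1 * v * t1) * t2
      = (x1⁻¹ * x1) * ((x2 * x3 * u⁻¹ * v) * (x4 * t1 * t2)) := by ac_rfl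
    _ = (w * w⁻¹) * ((x2 * x3 * u⁻¹ * v) * (t4 * t3)) := by
        rw [h, inv_mul_cancel, mul_inv_cancel]
    _ = (u⁻¹ * x2 * w * t3) * (w⁻¹ * x3 * v * t4) := by ac_rfl

lemma bTau2_flat {n : ℕ} (α : G → G → G → A)
    (hα : ∀ g h k l : G,
      (g • α h k l) * α g (h * k) l * α g h k = α g h (k * l) * α (g * h) k l)
    (g : Fin (n+2) → G) (a : ∀ j : Fin (n+1), Fin j.val → A)
    (i j k l : Fin (n+2)) (hij : i < j) (hjk : j < k) (hkl : k < l) :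
    (bTau1 g k l • bTau2 α g a i j k) * bTau2 α g a i k l
        * α (bTau1 g k l) (bTau1 g j k) (bTau1 g i j)
      = bTau2 α g a i j l * bTau2 α g a j k l := by
  have hik := hij.trans hjk
  have hjl := hjk.trans hkl
  have hj0 : (0 : Fin (n+2)) < j := lt_of_le_of_lt (Fin.zero_le i) hij
  by_cases hi : (0 : Fin (n+2)) < i
  · rw [bTau2, if_pos hi, if_pos ⟨hij, hjk⟩,
        bTau2, if_pos hi, if_pos ⟨hik, hkl⟩,
        bTau2, if_pos hi, if_pos ⟨hij, hjl⟩,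
        bTau2, if_pos hj0, if_pos ⟨hjk, hkl⟩,
        bTau1_mul g hij hjk, bTau1_mul g hjk hkl,
        bTau1_mul g hi hij]
    simp only [smul_mul', smul_inv', mul_smul]
    exact calc_aux _ _ _ _ _ _ _ _ _ _ _
      (hα (bTau1 g k l) (bTau1 g j k) (bTau1 g i j) (bTau1 g 0 i))
  · have hi0 : i = 0 := Fin.le_zero_iff.mp (not_lt.mp hi)
    subst hi0
    rw [bTau2, if_neg hi, bTau2, if_neg hi, bTau2, if_neg hi,
        bTau2, if_pos hj0, if_pos ⟨hjk, hkl⟩]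
    calc (bTau1 g k l • bA a j k) * bA a k l
          * α (bTau1 g k l) (bTau1 g j k) (bTau1 g 0 j)
        = bA a j l * ((bA a j l)⁻¹ * ((bTau1 g k l • bA a j k) * bA a k l
            * α (bTau1 g k l) (bTau1 g j k) (bTau1 g 0 j))) := by
          rw [mul_inv_cancel_left]
      _ = bA a j l * ((bA a j l)⁻¹ * (bTau1 g k l • bA a j k) * bA a k l
            * α (bTau1 g k l) (bTau1 g j k) (bTau1 g 0 j)) := by
          rw [mul_assoc ((bA a j l)⁻¹), mul_assoc ((bA a j l)⁻¹)]
end Aux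

/-- The set of flat `𝒢(G,A,α)`-connections on the boundary `∂Δ_{n+1}` of the
`(n+1)`-simplex, with vertices `0 < 1 < ⋯ < n+1`: data `τ₁` on edges `[i,j]`
(`i < j`) and `τ₂` on 2-simplices `[i,j,k]` (`i < j < k`), satisfying
1-flatness and 2-flatness; the data is normalized to `1` outside the ordered
ranges. -/
def FlatConnBdry (G A : Type*) [Group G] [CommGroup A] [MulDistribMulAction G A]
    (α : G → G → G → A) (n : ℕ) : Type _ :=
  {τ : (Fin (n+2) → Fin (n+2) → G) × (Fin (n+2) → Fin (n+2) → Fin (n+2) → A) //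
    (∀ i j k : Fin (n+2), i < j → j < k → τ.1 i k = τ.1 j k * τ.1 i j) ∧
    (∀ i j k l : Fin (n+2), i < j → j < k → k < l →
      (τ.1 k l • τ.2 i j k) * τ.2 i k l * α (τ.1 k l) (τ.1 j k) (τ.1 i j)
        = τ.2 i j l * τ.2 j k l) ∧
    (∀ i j : Fin (n+2), ¬ i < j → τ.1 i j = 1) ∧
    (∀ i j k : Fin (n+2), ¬ (i < j ∧ j < k) → τ.2 i j k = 1)}

section Equiv
variable {G A : Type*} [Group G] [CommGroup A] [MulDistribMulAction G A]
variable (α : G → G → G → A) {n : ℕ}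

lemma zero_lt_val {n : ℕ} {i : Fin (n+2)} : (0 : Fin (n+2)) < i ↔ 0 < i.val := by
  rw [Fin.lt_def]; simp

def toFlat (hα : ∀ g h k l : G,
      (g • α h k l) * α g (h * k) l * α g h k = α g h (k * l) * α (g * h) k l)
    (d : (Fin (n+1) → G) × (∀ j : Fin (n+1), Fin j.val → A)) :
    FlatConnBdry G A α n := by
  refine ⟨(bTau1 (gExt d.1), bTau2 α (gExt d.1) d.2), ?_, ?_, ?_, ?_⟩
  · exact fun i j k hij hjk => bTau1_mul _ hij hjk
  · exact fun i j k l hij hjk hkl => bTau2_flat α hα _ _ i j k l hij hjk hkl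
  · intro i j h; dsimp only; rw [bTau1, if_neg h]
  · intro i j k h
    dsimp only
    rw [bTau2]
    by_cases hi : (0 : Fin (n+2)) < i
    · rw [if_pos hi, if_neg h]
    · have hi0 : i = 0 := Fin.le_zero_iff.mp (not_lt.mp hi)
      subst hi0
      rw [if_neg hi, bA, dif_neg (by tauto)]

def ofFlat (τ : FlatConnBdry G A α n) :
    (Fin (n+1) → G) × (∀ j : Fin (n+1), Fin j.val → A) :=
  (fun i => τ.1.1 0 i.succ,
   fun j i => τ.1.2 0 ⟨i.val + 1, by have := j.isLt; have := i.isLt; omega⟩ j.succ)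

lemma flat_right_inv (hα : ∀ g h k l : G,
      (g • α h k l) * α g (h * k) l * α g h k = α g h (k * l) * α (g * h) k l)
    (d : (Fin (n+1) → G) × (∀ j : Fin (n+1), Fin j.val → A)) :
    ofFlat α (toFlat α hα d) = d := by
  refine Prod.ext ?_ ?_
  · funext i
    show bTau1 (gExt d.1) 0 i.succ = d.1 i
    rw [bTau1, if_pos (Fin.succ_pos i), gExt, gExt]
    simp
  · funext j i
    show bTau2 α (gExt d.1) d.2 0 _ j.succ = d.2 j i
    rw [bTau2, if_neg (lt_irrefl _), bA, dif_pos]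
    · rfl
    · constructor
      · rw [Fin.lt_def]; simp
      · rw [Fin.lt_def]; simp only [Fin.val_succ]
        have := i.isLt; omega

lemma flat_left_inv (hα : ∀ g h k l : G,
      (g • α h k l) * α g (h * k) l * α g h k = α g h (k * l) * α (g * h) k l)
    (τ : FlatConnBdry G A α n) : toFlat α hα (ofFlat α τ) = τ := by
  obtain ⟨h1, h2, h3, h4⟩ := τ.2
  have hgE : ∀ k : Fin (n+2), 0 < k → gExt (ofFlat α τ).1 k = τ.1.1 0 k := by
    intro k hk
    rw [zero_lt_val] at hk
    show gExt (fun i : Fin (n+1) => τ.1.1 0 i.succ) k = τ.1.1 0 k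
    rw [gExt, dif_neg (by omega)]
    have hsucc : (⟨k.val - 1, by have := k.isLt; omega⟩ : Fin (n+1)).succ = k := by
      rw [Fin.ext_iff]; simp only [Fin.val_succ, Fin.val_mk]; omega
    rw [hsucc]
  have recon1 : bTau1 (gExt (ofFlat α τ).1) = τ.1.1 := by
    funext i j
    rw [bTau1]
    split
    · rename_i hij
      have hj : (0 : Fin (n+2)) < j := lt_of_le_of_lt (Fin.zero_le i) hij
      by_cases hi : (0 : Fin (n+2)) < i
      · rw [hgE j hj, hgE i hi, h1 0 i j hi hij, mul_inv_cancel_right]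
      · have hi0 : i = 0 := Fin.le_zero_iff.mp (not_lt.mp hi)
        subst hi0
        rw [hgE j hj]
        show τ.1.1 0 j * (gExt (fun i : Fin (n+1) => τ.1.1 0 i.succ) 0)⁻¹ = _
        rw [gExt]; simp
    · rename_i hij
      exact (h3 i j hij).symm
  have reconA : ∀ j k : Fin (n+2), bA (ofFlat α τ).2 j k = τ.1.2 0 j k := by
    intro j k
    rw [bA]
    split
    · rename_i h
      have h1' := h.1; have h2' := h.2
      rw [zero_lt_val] at h1'; rw [Fin.lt_def] at h2'
      have hk := k.isLt; have hj := j.isLt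
      show τ.1.2 0 ⟨j.val - 1 + 1, by omega⟩
          ((⟨k.val - 1, by omega⟩ : Fin (n+1)).succ) = τ.1.2 0 j k
      have ej : (⟨j.val - 1 + 1, by omega⟩ : Fin (n+2)) = j := by
        rw [Fin.ext_iff]; simp only [Fin.val_mk]; omega
      have ek : ((⟨k.val - 1, by omega⟩ : Fin (n+1)).succ) = k := by
        rw [Fin.ext_iff]; simp only [Fin.val_succ, Fin.val_mk]; omega
      rw [ej, ek]
    · rename_i h
      exact (h4 0 j k h).symm
  refine Subtype.ext (Prod.ext recon1 ?_)
  show bTau2 α (gExt (ofFlat α τ).1) (ofFlat α τ).2 = τ.1.2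
  funext i j k
  rw [bTau2, recon1]
  by_cases hi : (0 : Fin (n+2)) < i
  · rw [if_pos hi]
    by_cases hjk : i < j ∧ j < k
    · rw [if_pos hjk, reconA, reconA, reconA]
      have hflat := h2 0 i j k hi hjk.1 hjk.2
      calc (τ.1.2 0 i k)⁻¹ * (τ.1.1 j k • τ.1.2 0 i j) * τ.1.2 0 j k
            * α (τ.1.1 j k) (τ.1.1 i j) (τ.1.1 0 i)
          = (τ.1.2 0 i k)⁻¹ * ((τ.1.1 j k • τ.1.2 0 i j) * τ.1.2 0 j k
            * α (τ.1.1 j k) (τ.1.1 i j) (τ.1.1 0 i)) := by group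
        _ = (τ.1.2 0 i k)⁻¹ * (τ.1.2 0 i k * τ.1.2 i j k) := by rw [hflat]
        _ = τ.1.2 i j k := inv_mul_cancel_left _ _
    · rw [if_neg hjk]
      exact (h4 i j k hjk).symm
  · have hi0 : i = 0 := Fin.le_zero_iff.mp (not_lt.mp hi)
    subst hi0
    rw [if_neg hi]
    exact reconA j k

def flatEquiv (hα : ∀ g h k l : G,
      (g • α h k l) * α g (h * k) l * α g h k = α g h (k * l) * α (g * h) k l) :
    ((Fin (n+1) → G) × (∀ j : Fin (n+1), Fin j.val → A)) ≃ FlatConnBdry G A α n where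
  toFun := toFlat α hα
  invFun := ofFlat α
  left_inv := flat_right_inv α hα
  right_inv := flat_left_inv α hα

end Equiv


/-- **Counting flat 2-group connections on `∂Δ_{n+1}` and the partition
function of `Sⁿ`.**  For `n ≥ 3`, the number of flat `𝒢(G,A,α)`-connections on
`∂Δ_{n+1}` is `|G|^{n+1} · |A|^{(n+1)n/2}`; consequently, when the action
`S(τ) = 1` for all flat connections, the partition function
`Z(Sⁿ) = |G|^{-(n+2)} · |A|^{-((n+2)(n+1)/2 − (n+2))} · #{flat connections}`
equals `|A|/|G|`. -/
theorem flat_connection_count_boundary_simplex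
    {G A : Type*} [Group G] [Fintype G] [CommGroup A] [Fintype A]
    [MulDistribMulAction G A]
    (α : G → G → G → A)
    (hα : ∀ g h k l : G,
      (g • α h k l) * α g (h * k) l * α g h k = α g h (k * l) * α (g * h) k l)
    (n : ℕ) (hn : 3 ≤ n) :
    Nat.card (FlatConnBdry G A α n)
        = Fintype.card G ^ (n + 1) * Fintype.card A ^ ((n + 1) * n / 2) ∧
    (Nat.card (FlatConnBdry G A α n) : ℚ)
        / ((Fintype.card G : ℚ) ^ (n + 2)
            * (Fintype.card A : ℚ) ^ ((n + 2) * (n + 1) / 2 - (n + 2)))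
      = (Fintype.card A : ℚ) / (Fintype.card G : ℚ) := by
  have hsum : ∑ j : Fin (n+1), j.val = (n + 1) * n / 2 := by
    rw [Fin.sum_univ_eq_sum_range (fun i => i) (n+1)]
    have h2 : (∑ i ∈ Finset.range (n+1), i) * 2 = (n+1) * n :=
      Finset.sum_range_id_mul_two (n+1)
    omega
  have hcard : Nat.card (FlatConnBdry G A α n)
      = Fintype.card G ^ (n + 1) * Fintype.card A ^ ((n + 1) * n / 2) := by
    rw [← Nat.card_congr (flatEquiv α hα), Nat.card_eq_fintype_card,
      Fintype.card_prod, Fintype.card_fun, Fintype.card_fin, Fintype.card_pi]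
    congr 1
    simp only [Fintype.card_fun, Fintype.card_fin]
    rw [Finset.prod_pow_eq_pow_sum, hsum]
  refine ⟨hcard, ?_⟩
  rw [hcard]
  have hA : (0:ℚ) < (Fintype.card A : ℚ) := by exact_mod_cast Fintype.card_pos
  have hG : (0:ℚ) < (Fintype.card G : ℚ) := by exact_mod_cast Fintype.card_pos
  have key : (n + 2) * (n + 1) / 2 = (n + 1) * n / 2 + (n + 1) := by
    rw [show (n + 2) * (n + 1) = (n + 1) * n + (n + 1) * 2 by ring,
      Nat.add_mul_div_right _ _ (by norm_num : 0 < 2)]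
  have h12 : 4 * 3 ≤ (n + 1) * n := Nat.mul_le_mul (by omega) hn
  have hexp : (n + 1) * n / 2 = ((n + 2) * (n + 1) / 2 - (n + 2)) + 1 := by omega
  rw [hexp]
  push_cast
  rw [div_eq_div_iff (by positivity) (ne_of_gt hG)]
  ring
end

section
/- Let G be a finite group, A a finite abelian group with G-action, α a normalized 3-cocycle, and M a triangulated manifold with ordered vertices. For a flat 𝒢-connection τ and a simple 2-gauge transformation φ_{a,e} (φ₀ ≡ e_G, φ₁ supported on a single edge e with value a ∈ A), the transformed connection T_{φ_{a,e}} τ given by (T_φ τ)₁ = τ₁ and (T_φ τ)₂(p) = τ₂(p)·(τ₁([p₁,p₂]) ▷ a)⁻¹ if e = [p₀,p₁], τ₂(p)·a⁻¹ if e = [p₁,p₂], τ₂(p)·a if e = [p₀,p₂], and τ₂(p) otherwise, is again flat: it satisfies the 2-flatness condition on every 3-simplex of M. -/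
open scoped Classical

/-- **Simple 2-gauge transformations preserve flatness.**  Vertices `V`, edges
`E` (with endpoints `s,t`), plaquettes `P` (with boundary edges
`e01,e12,e02`) and tetrahedra `T` (with faces `f012,f013,f023,f123`, sharing
edges as recorded by the hypotheses `h01,…,h23`).  Let `(τ₁,τ₂)` be a flat
`𝒢(G,A,α)`-connection (`α` a normalized 3-cocycle).  For the simple 2-gauge
transformation `φ_{a,e₀}` (with `φ₀ ≡ 1` and `φ₁` supported on the single edge
`e₀` with value `a`), the transformed connection `(τ₁, τ₂')`, where
`τ₂'(p) = τ₂(p)·(τ₁([p₁,p₂]) ▷ a)⁻¹` if `e₀ = [p₀,p₁]`, `τ₂(p)·a⁻¹` if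
`e₀ = [p₁,p₂]`, `τ₂(p)·a` if `e₀ = [p₀,p₂]`, and `τ₂(p)` otherwise, again
satisfies the 2-flatness condition on every tetrahedron. -/
theorem simple_two_gauge_preserves_flatness
    {G A : Type*} [Group G] [CommGroup A] [MulDistribMulAction G A]
    {V E P T : Type*}
    (s t : E → V) (e01 e12 e02 : P → E)
    (f012 f013 f023 f123 : T → P)
    (h01 : ∀ x, e01 (f012 x) = e01 (f013 x))
    (h12 : ∀ x, e12 (f012 x) = e01 (f123 x))
    (h02 : ∀ x, e02 (f012 x) = e01 (f023 x))
    (h13 : ∀ x, e12 (f013 x) = e02 (f123 x))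
    (h03 : ∀ x, e02 (f013 x) = e02 (f023 x))
    (h23 : ∀ x, e12 (f023 x) = e12 (f123 x))
    (α : G → G → G → A)
    (hα : ∀ g h k l : G,
      (g • α h k l) * α g (h * k) l * α g h k = α g h (k * l) * α (g * h) k l)
    (hnorm : ∀ g h k : G, g = 1 ∨ h = 1 ∨ k = 1 → α g h k = 1)
    (τ₁ : E → G) (τ₂ : P → A)
    (h1flat : ∀ p, τ₁ (e02 p) = τ₁ (e12 p) * τ₁ (e01 p))
    (h2flat : ∀ x,
      (τ₁ (e12 (f123 x)) • τ₂ (f012 x)) * τ₂ (f023 x)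
          * α (τ₁ (e12 (f123 x))) (τ₁ (e12 (f012 x))) (τ₁ (e01 (f012 x)))
        = τ₂ (f013 x) * τ₂ (f123 x))
    (e₀ : E) (a : A) :
    let τ₂' : P → A := fun p =>
      τ₂ p * (if e01 p = e₀ then (τ₁ (e12 p) • a)⁻¹ else 1)
        * (if e12 p = e₀ then a⁻¹ else 1)
        * (if e02 p = e₀ then a else 1)
    ∀ x,
      (τ₁ (e12 (f123 x)) • τ₂' (f012 x)) * τ₂' (f023 x)
          * α (τ₁ (e12 (f123 x))) (τ₁ (e12 (f012 x))) (τ₁ (e01 (f012 x)))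
        = τ₂' (f013 x) * τ₂' (f123 x) := by
  intro τ₂' x
  have key := h2flat x
  rw [← h23 x] at key
  have hf : τ₁ (e12 (f013 x)) = τ₁ (e12 (f023 x)) * τ₁ (e12 (f012 x)) := by
    have h := h1flat (f123 x)
    rw [← h13 x, ← h12 x, ← h23 x] at h
    exact h
  simp only [τ₂']
  rw [← h01 x, ← h02 x, ← h12 x, ← h03 x, ← h13 x, ← h23 x]
  set g := τ₁ (e12 (f023 x)) with hg
  have extra :
      g • ((if e01 (f012 x) = e₀ then (τ₁ (e12 (f012 x)) • a)⁻¹ else 1)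
            * (if e12 (f012 x) = e₀ then a⁻¹ else 1)
            * (if e02 (f012 x) = e₀ then a else 1))
        * ((if e02 (f012 x) = e₀ then (g • a)⁻¹ else 1)
            * (if e12 (f023 x) = e₀ then a⁻¹ else 1)
            * (if e02 (f013 x) = e₀ then a else 1))
      = ((if e01 (f012 x) = e₀ then (τ₁ (e12 (f013 x)) • a)⁻¹ else 1)
            * (if e12 (f013 x) = e₀ then a⁻¹ else 1)
            * (if e02 (f013 x) = e₀ then a else 1))
        * ((if e12 (f012 x) = e₀ then (g • a)⁻¹ else 1)
            * (if e12 (f023 x) = e₀ then a⁻¹ else 1)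
            * (if e12 (f013 x) = e₀ then a else 1)) := by
    split_ifs <;>
      (try simp only [hf, mul_smul, smul_mul', smul_inv', smul_one, one_mul, mul_one]) <;>
      (try (apply Additive.ofMul.injective
            simp only [ofMul_mul, ofMul_inv, ofMul_one]
            abel))
  calc g • (τ₂ (f012 x)
          * (if e01 (f012 x) = e₀ then (τ₁ (e12 (f012 x)) • a)⁻¹ else 1)
          * (if e12 (f012 x) = e₀ then a⁻¹ else 1)
          * (if e02 (f012 x) = e₀ then a else 1))
        * (τ₂ (f023 x)
          * (if e02 (f012 x) = e₀ then (g • a)⁻¹ else 1)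
          * (if e12 (f023 x) = e₀ then a⁻¹ else 1)
          * (if e02 (f013 x) = e₀ then a else 1))
        * α g (τ₁ (e12 (f012 x))) (τ₁ (e01 (f012 x)))
      = (g • τ₂ (f012 x) * τ₂ (f023 x)
          * α g (τ₁ (e12 (f012 x))) (τ₁ (e01 (f012 x))))
        * (g • ((if e01 (f012 x) = e₀ then (τ₁ (e12 (f012 x)) • a)⁻¹ else 1)
            * (if e12 (f012 x) = e₀ then a⁻¹ else 1)
            * (if e02 (f012 x) = e₀ then a else 1))
        * ((if e02 (f012 x) = e₀ then (g • a)⁻¹ else 1)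
            * (if e12 (f023 x) = e₀ then a⁻¹ else 1)
            * (if e02 (f013 x) = e₀ then a else 1))) := by
        simp only [smul_mul']
        apply Additive.ofMul.injective
        simp only [ofMul_mul, ofMul_inv, ofMul_one]
        abel
    _ = (τ₂ (f013 x) * τ₂ (f123 x))
        * (((if e01 (f012 x) = e₀ then (τ₁ (e12 (f013 x)) • a)⁻¹ else 1)
            * (if e12 (f013 x) = e₀ then a⁻¹ else 1)
            * (if e02 (f013 x) = e₀ then a else 1))
        * ((if e12 (f012 x) = e₀ then (g • a)⁻¹ else 1)
            * (if e12 (f023 x) = e₀ then a⁻¹ else 1)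
            * (if e12 (f013 x) = e₀ then a else 1))) := by rw [key, extra]
    _ = _ := by
        apply Additive.ofMul.injective
        simp only [ofMul_mul, ofMul_inv, ofMul_one]
        abel
end
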